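/- arXiv:0802.0012 — 3 statements merged into one kernel-verified Lean document; each statement's English description precedes it below -/
import Mathlib

section
/- For every fixed u ∈ H^m(ℝ), one has ‖A^λ u − L₀ u‖_{L²} → 0 as λ → 0+, and ‖A^λ u − (M + 1)u‖_{L²} → 0 as λ → +∞; that is, A^λ converges strongly to L₀ as λ → 0+ and strongly to M + 1 as λ → +∞. -/
open MeasureTheory Filter Set

noncomputable section

/-- An abstract realization of the Fourier–Plancherel transform on `L²(ℝ; ℂ)`:
a map on functions that is norm-preserving and linear on `L²` and agrees with the
usual Fourier integral on `L¹ ∩ L²` (hence is the standard `L²` Fourier transform). -/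
structure FourierL2 where
  toFun : (ℝ → ℂ) → ℝ → ℂ
  memLp : ∀ u : ℝ → ℂ, MemLp u 2 volume → MemLp (toFun u) 2 volume
  plancherel : ∀ u : ℝ → ℂ, MemLp u 2 volume →
    eLpNorm (toFun u) 2 volume = eLpNorm u 2 volume
  map_add : ∀ u v : ℝ → ℂ, MemLp u 2 volume → MemLp v 2 volume →
    toFun (u + v) =ᵐ[volume] toFun u + toFun v
  map_smul : ∀ (a : ℂ) (u : ℝ → ℂ), MemLp u 2 volume →
    toFun (a • u) =ᵐ[volume] a • toFun u
  agree : ∀ u : ℝ → ℂ, Integrable u volume → MemLp u 2 volume →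
    toFun u =ᵐ[volume] FourierTransform.fourier u

/-- Membership in the Sobolev space `H^m(ℝ) = {u ∈ L² : (1+|k|)^m û ∈ L²}`. -/
def HmMem (FT : FourierL2) (m : ℝ) (u : ℝ → ℂ) : Prop :=
  MemLp u 2 volume ∧ MemLp (fun k => ((1 + |k|) ^ m : ℝ) • FT.toFun u k) 2 volume

/-- The `L²` inner product. -/
def L2inner (u v : ℝ → ℂ) : ℂ := ∫ x : ℝ, u x * (starRingEnd ℂ) (v x)

/-- The `L²` norm. -/
def L2norm (u : ℝ → ℂ) : ℝ := (eLpNorm u 2 volume).toReal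

/-- `T` is the Fourier multiplier operator with symbol `β`, on the domain `D`. -/
def IsMult (FT : FourierL2) (β : ℝ → ℂ) (D : (ℝ → ℂ) → Prop)
    (T : (ℝ → ℂ) → ℝ → ℂ) : Prop :=
  ∀ u, D u → MemLp (T u) 2 volume ∧
    FT.toFun (T u) =ᵐ[volume] fun k => β k * FT.toFun u k

/-- The operator `L₀ = M + (1 - 1/c) - (1/c) f'(u_c)` for the BBM type equation. -/
def L0bbm (Mop : (ℝ → ℂ) → ℝ → ℂ) (f uc : ℝ → ℝ) (c : ℝ) (u : ℝ → ℂ) : ℝ → ℂ :=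
  fun x => Mop u x + (1 - 1/c : ℂ) * u x - (1/c : ℂ) * Complex.ofReal (deriv f (uc x)) * u x

/-- The operator `A^λ = M + 1 − (1/c)(1 − E^{λ,−})((1 + f'(u_c))·)` for the BBM type
equation, where `Em lam` is the Fourier multiplier with symbol `λ/(λ - ick)`. -/
def Abbm (Mop : (ℝ → ℂ) → ℝ → ℂ) (Em : ℝ → (ℝ → ℂ) → ℝ → ℂ)
    (f uc : ℝ → ℝ) (c lam : ℝ) (u : ℝ → ℂ) : ℝ → ℂ :=
  fun x => Mop u x + u x - (1/c : ℂ) *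
    (((1 + Complex.ofReal (deriv f (uc x))) * u x) -
      Em lam (fun y => (1 + Complex.ofReal (deriv f (uc y))) * u y) x)

/-!
Both differences are `1/c` times `E^{λ,-} w` resp. `(E^{λ,-} - 1) w`: `M` cancels, and
`w = (1 + f'(u_c)) u` is in `L²` because `f'(u_c)` is continuous and vanishes at infinity.
By Plancherel their norms are those of `σ_λ ŵ` resp. `(σ_λ - 1) ŵ`, where
`σ_λ(k) = λ/(λ - ick)`. Both symbols are bounded by `1`, and `σ_λ → 0` (for `k ≠ 0`) as
`λ → 0+`, `σ_λ → 1` as `λ → ∞`, so dominated convergence gives the two limits.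
-/

open scoped ENNReal Topology

theorem tendsto_eLpNorm_of_dominated {α E ι : Type*} [MeasurableSpace α] {μ : Measure α}
    [NormedAddCommGroup E] {l : Filter ι} [l.IsCountablyGenerated] {p : ℝ≥0∞}
    (hp0 : p ≠ 0) (hp : p ≠ ∞) {F : ι → α → E} {G : α → ℝ} (hG : MemLp G p μ)
    (hFm : ∀ᶠ i in l, AEStronglyMeasurable (F i) μ)
    (hFG : ∀ᶠ i in l, ∀ᵐ x ∂μ, ‖F i x‖ ≤ G x)
    (hF0 : ∀ᵐ x ∂μ, Tendsto (fun i => F i x) l (𝓝 0)) :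
    Tendsto (fun i => eLpNorm (F i) p μ) l (𝓝 0) := by
  have hpos : 0 < p.toReal := ENNReal.toReal_pos hp0 hp
  have hcont : Continuous fun z : E => ‖z‖ₑ ^ p.toReal :=
    ENNReal.continuous_rpow_const.comp continuous_enorm
  have hint : Tendsto (fun i => ∫⁻ x, ‖F i x‖ₑ ^ p.toReal ∂μ) l (𝓝 0) := by
    have := tendsto_lintegral_filter_of_dominated_convergence' (l := l)
      (F := fun i x => ‖F i x‖ₑ ^ p.toReal) (f := fun _ => 0)
      (fun x => ‖G x‖ₑ ^ p.toReal) ?_ ?_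
      (lintegral_rpow_enorm_lt_top_of_eLpNorm_lt_top hp0 hp hG.2).ne ?_
    · simpa using this
    · filter_upwards [hFm] with i hi
      exact hi.enorm.pow_const _
    · filter_upwards [hFG] with i hi
      filter_upwards [hi] with x hx
      gcongr
      exact enorm_le_iff_norm_le.mpr (hx.trans (Real.le_norm_self _))
    · filter_upwards [hF0] with x hx
      simpa [Function.comp_def, ENNReal.zero_rpow_of_pos hpos] using (hcont.tendsto 0).comp hx
  simp_rw [eLpNorm_eq_lintegral_rpow_enorm_toReal hp0 hp]
  simpa [Function.comp_def, ENNReal.zero_rpow_of_pos (inv_pos.mpr hpos)] using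
    ((ENNReal.continuous_rpow_const (y := 1 / p.toReal)).tendsto 0).comp hint

theorem exists_norm_le_of_tendsto_cocompact {X E : Type*} [TopologicalSpace X]
    [NormedAddCommGroup E] {g : X → E} (hg : Continuous g)
    (hg0 : Tendsto g (cocompact X) (𝓝 0)) : ∃ C, ∀ x, ‖g x‖ ≤ C :=
  let g₀ : ZeroAtInftyContinuousMap X E := ⟨⟨g, hg⟩, hg0⟩
  ⟨‖g₀.toBCF‖, g₀.toBCF.norm_coe_le_norm⟩

theorem FourierL2.toFun_sub (FT : FourierL2) {u v : ℝ → ℂ} (hu : MemLp u 2 volume)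
    (hv : MemLp v 2 volume) : FT.toFun (u - v) =ᵐ[volume] FT.toFun u - FT.toFun v := by
  filter_upwards [FT.map_add u (-v) hu hv.neg, FT.map_smul (-1) v hv] with k hadd hneg
  simp only [neg_one_smul] at hneg
  simp [sub_eq_add_neg, hadd, hneg]

namespace IsMult

variable {FT : FourierL2} {D : (ℝ → ℂ) → Prop} {u : ℝ → ℂ}

theorem sub_id {β : ℝ → ℂ} {T : (ℝ → ℂ) → ℝ → ℂ} (hT : IsMult FT β D T) :
    IsMult FT (fun k => β k - 1) (fun u => D u ∧ MemLp u 2 volume) (fun u => T u - u) := by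
  rintro u ⟨hu, hu2⟩
  obtain ⟨hTu, hFT⟩ := hT u hu
  refine ⟨hTu.sub hu2, ?_⟩
  filter_upwards [FT.toFun_sub hTu hu2, hFT] with k hsub hmul
  simp [hsub, hmul, sub_mul]

theorem eLpNorm_apply {β : ℝ → ℂ} {T : (ℝ → ℂ) → ℝ → ℂ} (hT : IsMult FT β D T)
    (hu : D u) :
    eLpNorm (T u) 2 volume = eLpNorm (fun k => β k * FT.toFun u k) 2 volume := by
  rw [← FT.plancherel _ (hT u hu).1]
  exact eLpNorm_congr_ae (hT u hu).2

theorem tendsto_eLpNorm_apply {ι : Type*} {l : Filter ι} [l.IsCountablyGenerated]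
    {β : ι → ℝ → ℂ} {T : ι → (ℝ → ℂ) → ℝ → ℂ} {C : ℝ}
    (hT : ∀ᶠ i in l, IsMult FT (β i) D (T i))
    (hβm : ∀ᶠ i in l, AEStronglyMeasurable (β i) volume)
    (hβC : ∀ᶠ i in l, ∀ᵐ k, ‖β i k‖ ≤ C)
    (hβ0 : ∀ᵐ k, Tendsto (fun i => β i k) l (𝓝 0))
    (hu : D u) (hu2 : MemLp u 2 volume) :
    Tendsto (fun i => eLpNorm (T i u) 2 volume) l (𝓝 0) := by
  have hû := FT.memLp u hu2
  refine (tendsto_eLpNorm_of_dominated two_ne_zero ENNReal.ofNat_ne_top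
    (F := fun i k => β i k * FT.toFun u k) (G := fun k => C * ‖FT.toFun u k‖)
    (hû.norm.const_mul C) ?_ ?_ ?_).congr' ?_
  · filter_upwards [hβm] with i hi using hi.mul hû.1
  · filter_upwards [hβC] with i hi
    filter_upwards [hi] with k hk
    rw [norm_mul]
    exact mul_le_mul_of_nonneg_right hk (norm_nonneg _)
  · filter_upwards [hβ0] with k hk
    simpa using hk.mul_const (FT.toFun u k)
  · filter_upwards [hT] with i hi using (hi.eLpNorm_apply hu).symm

end IsMult

theorem norm_ofReal_sub_I_mul (lam c k : ℝ) :
    ‖(lam : ℂ) - Complex.I * c * k‖ = √(lam ^ 2 + (c * k) ^ 2) := by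
  simp [Complex.norm_eq_sqrt_sq_add_sq]

theorem abs_le_norm_ofReal_sub_I_mul (lam c k : ℝ) :
    |lam| ≤ ‖(lam : ℂ) - Complex.I * c * k‖ := by
  rw [norm_ofReal_sub_I_mul, ← Real.sqrt_sq_eq_abs]
  exact Real.sqrt_le_sqrt (by nlinarith [sq_nonneg (c * k)])

theorem abs_mul_le_norm_ofReal_sub_I_mul (lam c k : ℝ) :
    |c * k| ≤ ‖(lam : ℂ) - Complex.I * c * k‖ := by
  rw [norm_ofReal_sub_I_mul, ← Real.sqrt_sq_eq_abs]
  exact Real.sqrt_le_sqrt (by nlinarith [sq_nonneg lam])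

def emSymbol (c lam k : ℝ) : ℂ := lam / (lam - Complex.I * c * k)

theorem norm_emSymbol_le_one (c lam k : ℝ) : ‖emSymbol c lam k‖ ≤ 1 := by
  rw [emSymbol, norm_div]
  exact div_le_one_of_le₀ (by simpa using abs_le_norm_ofReal_sub_I_mul lam c k) (norm_nonneg _)

theorem norm_emSymbol_sub_one_le_one (c lam k : ℝ) : ‖emSymbol c lam k - 1‖ ≤ 1 := by
  rcases eq_or_ne ((lam : ℂ) - Complex.I * c * k) 0 with h | h
  · simp [emSymbol, h]
  · rw [emSymbol, div_sub_one h, sub_sub_cancel, norm_div]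
    exact div_le_one_of_le₀ (by simpa [abs_mul] using abs_mul_le_norm_ofReal_sub_I_mul lam c k)
      (norm_nonneg _)

theorem norm_emSymbol_sub_one_le {c lam k : ℝ} (hlam : 0 < lam) :
    ‖emSymbol c lam k - 1‖ ≤ |c * k| / lam := by
  have hlam_le : lam ≤ ‖(lam : ℂ) - Complex.I * c * k‖ := by
    simpa [abs_of_pos hlam] using abs_le_norm_ofReal_sub_I_mul lam c k
  have hden : (lam : ℂ) - Complex.I * c * k ≠ 0 := norm_pos_iff.mp (hlam.trans_le hlam_le)
  rw [emSymbol, div_sub_one hden, sub_sub_cancel, norm_div]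
  calc ‖Complex.I * c * k‖ / ‖(lam : ℂ) - Complex.I * c * k‖
      = |c * k| / ‖(lam : ℂ) - Complex.I * c * k‖ := by simp [abs_mul]
    _ ≤ |c * k| / lam := div_le_div_of_nonneg_left (abs_nonneg _) hlam hlam_le

theorem tendsto_emSymbol_atTop (c k : ℝ) :
    Tendsto (fun lam => emSymbol c lam k) atTop (𝓝 1) := by
  rw [tendsto_iff_norm_sub_tendsto_zero]
  refine squeeze_zero' (Eventually.of_forall fun _ => norm_nonneg _)
    ((eventually_gt_atTop 0).mono fun _ => norm_emSymbol_sub_one_le)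
    (tendsto_const_nhds.div_atTop tendsto_id)

theorem tendsto_emSymbol_nhds_zero {c k : ℝ} (hck : c * k ≠ 0) :
    Tendsto (fun lam => emSymbol c lam k) (𝓝 0) (𝓝 0) := by
  have hden : (0 : ℂ) - Complex.I * c * k ≠ 0 := by
    simpa [mul_assoc, Complex.I_ne_zero] using hck
  have hofReal := Complex.continuous_ofReal.tendsto 0
  simpa [emSymbol, Pi.div_def] using hofReal.div (hofReal.sub tendsto_const_nhds) hden

theorem measurable_emSymbol (c lam : ℝ) : Measurable (emSymbol c lam) := by
  unfold emSymbol
  fun_prop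

section StrongLimits

variable {FT : FourierL2} {Em : ℝ → (ℝ → ℂ) → ℝ → ℂ} {c : ℝ} {w : ℝ → ℂ}

theorem tendsto_eLpNorm_apply_nhdsGT_zero (hc : c ≠ 0)
    (hEm : ∀ lam, 0 < lam → IsMult FT (emSymbol c lam) (MemLp · 2 volume) (Em lam))
    (hw : MemLp w 2 volume) :
    Tendsto (fun lam => eLpNorm (Em lam w) 2 volume) (𝓝[>] 0) (𝓝 0) := by
  have hsymb : ∀ᵐ k, Tendsto (fun lam => emSymbol c lam k) (𝓝[>] 0) (𝓝 0) := by
    filter_upwards [Measure.ae_ne volume 0] with k hk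
    exact (tendsto_emSymbol_nhds_zero (mul_ne_zero hc hk)).mono_left nhdsWithin_le_nhds
  exact IsMult.tendsto_eLpNorm_apply (eventually_mem_nhdsWithin.mono hEm)
    (.of_forall fun lam => (measurable_emSymbol c lam).aestronglyMeasurable)
    (.of_forall fun lam => .of_forall (norm_emSymbol_le_one c lam)) hsymb hw hw

theorem tendsto_eLpNorm_apply_sub_self_atTop
    (hEm : ∀ lam, 0 < lam → IsMult FT (emSymbol c lam) (MemLp · 2 volume) (Em lam))
    (hw : MemLp w 2 volume) :
    Tendsto (fun lam => eLpNorm (Em lam w - w) 2 volume) atTop (𝓝 0) := by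
  have hsymb : ∀ᵐ k, Tendsto (fun lam => emSymbol c lam k - 1) atTop (𝓝 0) :=
    .of_forall fun k => tendsto_sub_nhds_zero_iff.mpr (tendsto_emSymbol_atTop c k)
  exact IsMult.tendsto_eLpNorm_apply (T := fun lam v => Em lam v - v)
    ((eventually_gt_atTop 0).mono fun lam hlam => (hEm lam hlam).sub_id)
    (.of_forall fun lam => ((measurable_emSymbol c lam).sub_const 1).aestronglyMeasurable)
    (.of_forall fun lam => .of_forall (norm_emSymbol_sub_one_le_one c lam)) hsymb ⟨hw, hw⟩ hw

end StrongLimits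

theorem MemLp.continuous_mul_of_tendsto_cocompact {X : Type*} [TopologicalSpace X]
    [MeasurableSpace X] [OpensMeasurableSpace X] {μ : Measure X} {p : ℝ≥0∞}
    {a u : X → ℂ} {y : ℂ} (ha : Continuous a) (ha_lim : Tendsto a (cocompact X) (𝓝 y))
    (hu : MemLp u p μ) : MemLp (fun x => a x * u x) p μ := by
  obtain ⟨C, hC⟩ := exists_norm_le_of_tendsto_cocompact (g := fun x => a x - y)
    (by fun_prop) (by simpa using ha_lim.sub_const y)
  refine hu.of_le_mul (c := C + ‖y‖) (ha.aestronglyMeasurable.mul hu.1)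
    (Eventually.of_forall fun x => ?_)
  rw [norm_mul]
  gcongr
  calc ‖a x‖ = ‖(a x - y) + y‖ := by rw [sub_add_cancel]
    _ ≤ C + ‖y‖ := (norm_add_le _ _).trans (by gcongr; exact hC x)

theorem Abbm_sub_L0bbm (Mop : (ℝ → ℂ) → ℝ → ℂ) (Em : ℝ → (ℝ → ℂ) → ℝ → ℂ) (f uc : ℝ → ℝ)
    (c lam : ℝ) (u : ℝ → ℂ) :
    (fun x => Abbm Mop Em f uc c lam u x - L0bbm Mop f uc c u x)
      = (1 / c : ℂ) • Em lam (fun y => (1 + Complex.ofReal (deriv f (uc y))) * u y) := by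
  funext x
  simp only [Abbm, L0bbm, Pi.smul_apply, smul_eq_mul]
  ring

theorem Abbm_sub_Mop_add_self (Mop : (ℝ → ℂ) → ℝ → ℂ) (Em : ℝ → (ℝ → ℂ) → ℝ → ℂ) (f uc : ℝ → ℝ)
    (c lam : ℝ) (u : ℝ → ℂ) :
    (fun x => Abbm Mop Em f uc c lam u x - (Mop u x + u x))
      = (1 / c : ℂ) • (Em lam (fun y => (1 + Complex.ofReal (deriv f (uc y))) * u y)
          - fun y => (1 + Complex.ofReal (deriv f (uc y))) * u y) := by
  funext x
  simp only [Abbm, Pi.smul_apply, Pi.sub_apply, smul_eq_mul]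
  ring

theorem A_lambda_strong_limits_general
    (m : ℝ)
    (FT : FourierL2)
    (Mop : (ℝ → ℂ) → ℝ → ℂ)
    (f : ℝ → ℝ) (hf : ContDiff ℝ 1 f) (hf'0 : deriv f 0 = 0)
    (c : ℝ) (hc : 1 < c)
    (uc : ℝ → ℝ) (huc_cont : Continuous uc)
    (huc_decay : Tendsto uc (cocompact ℝ) (nhds 0))
    (Em : ℝ → (ℝ → ℂ) → ℝ → ℂ)
    (hEm : ∀ lam : ℝ, 0 < lam → IsMult FT
        (fun k => (lam : ℂ) / (lam - Complex.I * c * k)) (fun u => MemLp u 2 volume) (Em lam))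
    (u : ℝ → ℂ) (hu : HmMem FT m u) :
    Tendsto (fun lam => eLpNorm
        (fun x => Abbm Mop Em f uc c lam u x - L0bbm Mop f uc c u x) 2 volume)
      (nhdsWithin (0 : ℝ) (Ioi (0 : ℝ))) (nhds 0) ∧
    Tendsto (fun lam => eLpNorm
        (fun x => Abbm Mop Em f uc c lam u x - (Mop u x + u x)) 2 volume)
      atTop (nhds 0) := by
  have hf' : Continuous (deriv f) := hf.continuous_deriv le_rfl
  have hcoeff :
      Tendsto (fun y => 1 + Complex.ofReal (deriv f (uc y))) (cocompact ℝ) (𝓝 1) := by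
    simpa [hf'0] using
      tendsto_const_nhds.add ((Complex.continuous_ofReal.comp hf').tendsto 0 |>.comp huc_decay)
  have hw : MemLp (fun y => (1 + Complex.ofReal (deriv f (uc y))) * u y) 2 volume :=
    MemLp.continuous_mul_of_tendsto_cocompact (by fun_prop) hcoeff hu.1
  constructor
  · simp_rw [Abbm_sub_L0bbm, eLpNorm_const_smul]
    simpa using ENNReal.Tendsto.const_mul
      (tendsto_eLpNorm_apply_nhdsGT_zero (zero_lt_one.trans hc).ne' hEm hw) (Or.inr enorm_ne_top)
  · simp_rw [Abbm_sub_Mop_add_self, eLpNorm_const_smul]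
    simpa using ENNReal.Tendsto.const_mul
      (tendsto_eLpNorm_apply_sub_self_atTop hEm hw) (Or.inr enorm_ne_top)

/-- Corollary 2.2: for fixed `u ∈ H^m`, `A^λ u → L₀ u` in `L²` as `λ → 0+` and
`A^λ u → (M + 1)u` in `L²` as `λ → +∞`. -/
theorem A_lambda_strong_limits
    (m : ℝ) (hm : 1 ≤ m)
    (α : ℝ → ℝ) (a b C₀ K : ℝ)
    (ha : 0 < a) (hb : 0 < b) (hC₀ : 0 < C₀) (hK : 0 < K)
    (hα_nonneg : ∀ k, 0 ≤ α k) (hα_smooth : ContDiff ℝ 1 α)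
    (hα_deriv : ∀ k, |deriv α k| ≤ C₀ * (1 + |k|) ^ (m - 1))
    (hα_lower : ∀ k, K ≤ |k| → a * |k| ^ m ≤ α k)
    (hα_upper : ∀ k, K ≤ |k| → α k ≤ b * |k| ^ m)
    (FT : FourierL2)
    (Mop : (ℝ → ℂ) → ℝ → ℂ)
    (hM : IsMult FT (fun k => (α k : ℂ)) (HmMem FT m) Mop)
    (f : ℝ → ℝ) (hf : ContDiff ℝ 1 f) (hf0 : f 0 = 0) (hf'0 : deriv f 0 = 0)
    (c : ℝ) (hc : 1 < c)
    (uc : ℝ → ℝ) (huc_cont : Continuous uc)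
    (huc_mem : HmMem FT m (fun x => (uc x : ℂ)))
    (huc_decay : Tendsto uc (cocompact ℝ) (nhds 0))
    (huc_eq : (fun x => Mop (fun y => (uc y : ℂ)) x + (1 - 1/c : ℂ) * (uc x : ℂ)
        - (1/c : ℂ) * (f (uc x) : ℂ)) =ᵐ[volume] 0)
    (Em : ℝ → (ℝ → ℂ) → ℝ → ℂ)
    (hEm : ∀ lam : ℝ, 0 < lam → IsMult FT
        (fun k => (lam : ℂ) / (lam - Complex.I * c * k)) (fun u => MemLp u 2 volume) (Em lam))
    (u : ℝ → ℂ) (hu : HmMem FT m u) :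
    Tendsto (fun lam => eLpNorm
        (fun x => Abbm Mop Em f uc c lam u x - L0bbm Mop f uc c u x) 2 volume)
      (nhdsWithin (0 : ℝ) (Ioi (0 : ℝ))) (nhds 0) ∧
    Tendsto (fun lam => eLpNorm
        (fun x => Abbm Mop Em f uc c lam u x - (Mop u x + u x)) 2 volume)
      atTop (nhds 0) :=
  A_lambda_strong_limits_general m FT Mop f hf hf'0 c hc uc huc_cont huc_decay Em hEm u hu
end
end

section
/- Fix λ > 0 and a complex number z with Re z < ½(1 − 1/c). Then there exists N such that for every n ≥ N and every u ∈ H^m(ℝ) with ‖u‖_{L²} = 1 and support contained in {x : |x| ≥ n}, one has Re((A^λ − z)u, u)_{L²} ≥ ¼(1 − 1/c). -/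
/-!
On the Fourier side `M` and `E^{λ,−}` have symbols with nonnegative real part, so
`Re (M u, u) ≥ 0` and `Re (E^{λ,−} u, u) ≥ 0`, and `E^{λ,−}` is an `L²` contraction. Writing
`(1 + f'(u_c)) u = u + g` with `g = f'(u_c) u`, for `‖u‖ = 1`
`Re ((A^λ − z)u, u) = Re (Mu, u) + 1 − 1/c − Re z − (1/c) Re (g, u) + (1/c) Re (E^{λ,−}(u + g), u)`
and only the two terms involving `g` can be negative, and each is at least `−‖g‖/c`. Since
`f'(u_c(x)) → 0` as `|x| → ∞`, `‖g‖ ≤ (c − 1)/8` once `u` is supported far enough out, and then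
the remaining loss `2‖g‖/c ≤ ¼(1 − 1/c)` is absorbed by `1 − 1/c − Re z > ½(1 − 1/c)`.
-/

open MeasureTheory Filter Set
open MeasureTheory Filter Set

noncomputable section

lemma integrable_mul_conj {u v : ℝ → ℂ} (hu : MemLp u 2 volume) (hv : MemLp v 2 volume) :
    Integrable (fun x => u x * starRingEnd ℂ (v x)) volume := by
  refine (L2.integrable_inner (𝕜 := ℂ) (hv.toLp v) (hu.toLp u)).congr ?_
  filter_upwards [hu.coeFn_toLp, hv.coeFn_toLp] with x h₁ h₂
  rw [RCLike.inner_apply, h₁, h₂, mul_comm]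

lemma L2inner_eq_inner {u v : ℝ → ℂ} (hu : MemLp u 2 volume) (hv : MemLp v 2 volume) :
    L2inner u v = inner ℂ (hv.toLp v) (hu.toLp u) := by
  rw [L2.inner_def]
  refine integral_congr_ae ?_
  filter_upwards [hu.coeFn_toLp, hv.coeFn_toLp] with x h₁ h₂
  rw [h₁, h₂, RCLike.inner_apply, mul_comm]

lemma L2inner_add_left {u v w : ℝ → ℂ} (hu : MemLp u 2 volume) (hv : MemLp v 2 volume)
    (hw : MemLp w 2 volume) : L2inner (u + v) w = L2inner u w + L2inner v w := by
  simp only [L2inner, Pi.add_apply, add_mul]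
  exact integral_add (integrable_mul_conj hu hw) (integrable_mul_conj hv hw)

lemma L2inner_smul_left (a : ℂ) (u v : ℝ → ℂ) : L2inner (a • u) v = a * L2inner u v := by
  simp only [L2inner, Pi.smul_apply, smul_eq_mul, mul_assoc]
  exact integral_const_mul a _

lemma L2inner_congr_ae_left {u u' : ℝ → ℂ} (h : u =ᵐ[volume] u') (v : ℝ → ℂ) :
    L2inner u v = L2inner u' v :=
  integral_congr_ae (by filter_upwards [h] with x hx; rw [hx])

lemma norm_L2inner_le {u v : ℝ → ℂ} (hu : MemLp u 2 volume) (hv : MemLp v 2 volume) :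
    ‖L2inner u v‖ ≤ L2norm u * L2norm v := by
  rw [L2inner_eq_inner hu hv, L2norm, L2norm, ← Lp.norm_toLp u hu, ← Lp.norm_toLp v hv,
    mul_comm]
  exact norm_inner_le_norm _ _

lemma L2inner_self {u : ℝ → ℂ} (hu : MemLp u 2 volume) : L2inner u u = (L2norm u : ℂ) ^ 2 := by
  rw [L2inner_eq_inner hu hu, inner_self_eq_norm_sq_to_K, Lp.norm_toLp, L2norm]
  rfl

lemma abs_re_L2inner_le {u v : ℝ → ℂ} (hu : MemLp u 2 volume) (hv : MemLp v 2 volume) :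
    |(L2inner u v).re| ≤ L2norm u * L2norm v :=
  (Complex.abs_re_le_norm _).trans (norm_L2inner_le hu hv)

lemma L2norm_le_mul_of_norm_le_mul {u v : ℝ → ℂ} {ε : ℝ} (hu : MemLp u 2 volume)
    (hε : 0 ≤ ε) (h : ∀ x, ‖v x‖ ≤ ε * ‖u x‖) : L2norm v ≤ ε * L2norm u := by
  have hv := eLpNorm_le_mul_eLpNorm_of_ae_le_mul (μ := volume) (Eventually.of_forall h) 2
  rw [L2norm, L2norm, ← ENNReal.toReal_ofReal hε, ← ENNReal.toReal_mul]
  exact ENNReal.toReal_mono (ENNReal.mul_ne_top ENNReal.ofReal_ne_top hu.eLpNorm_ne_top) hv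

namespace FourierL2

variable (FT : FourierL2) {u v : ℝ → ℂ}

lemma toFun_add_smul (hu : MemLp u 2 volume) (hv : MemLp v 2 volume) (a : ℂ) :
    FT.toFun (u + a • v) =ᵐ[volume] FT.toFun u + a • FT.toFun v := by
  filter_upwards [FT.map_add u (a • v) hu (hv.const_smul a), FT.map_smul a v hv] with k h₁ h₂
  simp only [Pi.add_apply, Pi.smul_apply] at h₁ h₂ ⊢
  rw [h₁, h₂]

lemma ae_eq_of_toFun_ae_eq (hu : MemLp u 2 volume) (hv : MemLp v 2 volume)
    (h : FT.toFun u =ᵐ[volume] FT.toFun v) : u =ᵐ[volume] v := by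
  have hsub : MemLp (u + (-1 : ℂ) • v) 2 volume := hu.add (hv.const_smul _)
  have hFT : FT.toFun (u + (-1 : ℂ) • v) =ᵐ[volume] 0 := by
    filter_upwards [FT.toFun_add_smul hu hv (-1), h] with k h₁ h₂
    rw [h₁]
    simp [h₂]
  have hzero : eLpNorm (u + (-1 : ℂ) • v) 2 volume = 0 := by
    rw [← FT.plancherel _ hsub, eLpNorm_congr_ae hFT, eLpNorm_zero]
  filter_upwards [(eLpNorm_eq_zero_iff hsub.aestronglyMeasurable two_ne_zero).mp hzero]
    with x hx
  simpa [sub_eq_zero, ← sub_eq_add_neg] using hx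

/-- Parseval's identity, from the Plancherel identity by polarization. -/
lemma L2inner_toFun (hu : MemLp u 2 volume) (hv : MemLp v 2 volume) :
    L2inner (FT.toFun u) (FT.toFun v) = L2inner u v := by
  have hu' := FT.memLp u hu
  have hv' := FT.memLp v hv
  have hnorm : ∀ a : ℂ, ‖hv'.toLp _ + a • hu'.toLp _‖ = ‖hv.toLp v + a • hu.toLp u‖ := by
    intro a
    rw [← MemLp.toLp_const_smul, ← MemLp.toLp_add, ← MemLp.toLp_const_smul, ← MemLp.toLp_add,
      Lp.norm_toLp, Lp.norm_toLp, ← FT.plancherel _ (hv.add (hu.const_smul a)),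
      eLpNorm_congr_ae (FT.toFun_add_smul hv hu a)]
  have hnorm' : ∀ a : ℂ, ‖hv'.toLp _ - a • hu'.toLp _‖ = ‖hv.toLp v - a • hu.toLp u‖ := by
    intro a
    simpa [sub_eq_add_neg] using hnorm (-a)
  rw [L2inner_eq_inner hu' hv', L2inner_eq_inner hu hv, inner_eq_sum_norm_sq_div_four,
    inner_eq_sum_norm_sq_div_four, hnorm' RCLike.I, hnorm RCLike.I]
  simpa using congrArg₂ (fun s t : ℝ => ((s : ℂ) ^ 2 - (t : ℂ) ^ 2)) (hnorm 1) (hnorm' 1)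

end FourierL2

namespace IsMult

variable {FT : FourierL2} {β : ℝ → ℂ} {D : (ℝ → ℂ) → Prop} {T : (ℝ → ℂ) → ℝ → ℂ} {u v : ℝ → ℂ}

lemma re_L2inner_nonneg (hT : IsMult FT β D T) (hβ : ∀ k, 0 ≤ (β k).re) (hD : D u)
    (hu : MemLp u 2 volume) : 0 ≤ (L2inner (T u) u).re := by
  obtain ⟨hTu, hF⟩ := hT u hD
  rw [← FT.L2inner_toFun hTu hu, L2inner, ← RCLike.re_to_complex,
    ← integral_re (integrable_mul_conj (FT.memLp _ hTu) (FT.memLp _ hu))]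
  refine integral_nonneg_of_ae ?_
  filter_upwards [hF] with k hk
  rw [hk, mul_assoc, Complex.mul_conj]
  simpa using mul_nonneg (hβ k) (Complex.normSq_nonneg _)

lemma L2norm_le (hT : IsMult FT β D T) (hβ : ∀ k, ‖β k‖ ≤ 1) (hD : D u)
    (hu : MemLp u 2 volume) : L2norm (T u) ≤ L2norm u := by
  obtain ⟨hTu, hF⟩ := hT u hD
  rw [L2norm, L2norm, ← FT.plancherel _ hTu, ← FT.plancherel _ hu, eLpNorm_congr_ae hF]
  refine ENNReal.toReal_mono (FT.memLp u hu).eLpNorm_ne_top (eLpNorm_mono fun k => ?_)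
  rw [norm_mul]
  exact mul_le_of_le_one_left (norm_nonneg _) (hβ k)

lemma ae_add (hT : IsMult FT β (fun u => MemLp u 2 volume) T) (hu : MemLp u 2 volume)
    (hv : MemLp v 2 volume) : T (u + v) =ᵐ[volume] T u + T v := by
  obtain ⟨huv, hFuv⟩ := hT (u + v) (hu.add hv)
  obtain ⟨hu', hFu⟩ := hT u hu
  obtain ⟨hv', hFv⟩ := hT v hv
  refine FT.ae_eq_of_toFun_ae_eq huv (hu'.add hv') ?_
  filter_upwards [hFuv, hFu, hFv, FT.map_add u v hu hv, FT.map_add _ _ hu' hv']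
    with k h₁ h₂ h₃ h₄ h₅
  simp only [Pi.add_apply] at h₄ h₅
  rw [h₁, h₅, h₂, h₃, h₄, mul_add]

end IsMult

lemma re_ofReal_div_sub_I_mul_nonneg (lam c k : ℝ) :
    0 ≤ ((lam : ℂ) / (lam - Complex.I * c * k)).re := by
  simp only [Complex.div_re, Complex.ofReal_re, Complex.ofReal_im, Complex.sub_re,
    Complex.mul_re, Complex.I_re, Complex.I_im, zero_mul, mul_zero, sub_zero, zero_div, add_zero]
  exact div_nonneg (mul_self_nonneg lam) (Complex.normSq_nonneg _)

lemma norm_ofReal_div_sub_I_mul_le_one (lam c k : ℝ) :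
    ‖(lam : ℂ) / (lam - Complex.I * c * k)‖ ≤ 1 := by
  rw [norm_div]
  refine div_le_one_of_le₀ ?_ (norm_nonneg _)
  calc ‖(lam : ℂ)‖ = |((lam : ℂ) - Complex.I * c * k).re| := by simp
    _ ≤ _ := Complex.abs_re_le_norm _

lemma exists_nat_forall_abs_le_of_tendsto_cocompact {φ : ℝ → ℝ}
    (hφ : Tendsto φ (cocompact ℝ) (nhds 0)) {ε : ℝ} (hε : 0 < ε) :
    ∃ N : ℕ, ∀ x, (N : ℝ) ≤ |x| → |φ x| ≤ ε := by
  have h : ∀ᶠ x in comap norm atTop, |φ x| ≤ ε := by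
    rw [comap_norm_atTop, Metric.cobounded_eq_cocompact]
    simpa using hφ.eventually (Metric.closedBall_mem_nhds 0 hε)
  obtain ⟨R, -, hR⟩ := (atTop_basis.comap norm).eventually_iff.mp h
  exact ⟨⌈R⌉₊, fun x hx => hR ((Nat.le_ceil R).trans hx)⟩

section Abbm

variable {FT : FourierL2} {Mop : (ℝ → ℂ) → ℝ → ℂ} {Em : ℝ → (ℝ → ℂ) → ℝ → ℂ} {f uc : ℝ → ℝ}
  {c lam ε : ℝ} {α β : ℝ → ℂ} {D : (ℝ → ℂ) → Prop} {u g : ℝ → ℂ}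

lemma L2inner_Abbm_sub_smul (hMu : MemLp (Mop u) 2 volume)
    (hE : IsMult FT β (fun u => MemLp u 2 volume) (Em lam)) (hu : MemLp u 2 volume)
    (hg : MemLp g 2 volume) (hw : (fun y => (1 + Complex.ofReal (deriv f (uc y))) * u y) = u + g)
    (z : ℂ) :
    L2inner (fun x => Abbm Mop Em f uc c lam u x - z * u x) u =
      L2inner (Mop u) u + (1 - 1/c - z) * L2inner u u - 1/c * L2inner g u +
        1/c * (L2inner (Em lam u) u + L2inner (Em lam g) u) := by
  have hEw := (hE (u + g) (hu.add hg)).1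
  have hA : (fun x => Abbm Mop Em f uc c lam u x - z * u x) =
      Mop u + (1 - 1/c - z : ℂ) • u + (-(1/c) : ℂ) • g + (1/c : ℂ) • Em lam (u + g) := by
    funext x
    have hx : (1 + Complex.ofReal (deriv f (uc x))) * u x = u x + g x := congrFun hw x
    simp only [Abbm, hx, hw, Pi.add_apply, Pi.smul_apply, smul_eq_mul]
    ring
  rw [hA, L2inner_add_left ((hMu.add (hu.const_smul _)).add (hg.const_smul _))
      (hEw.const_smul _) hu,
    L2inner_add_left (hMu.add (hu.const_smul _)) (hg.const_smul _) hu,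
    L2inner_add_left hMu (hu.const_smul _) hu, L2inner_smul_left, L2inner_smul_left,
    L2inner_smul_left, L2inner_congr_ae_left (hE.ae_add hu hg),
    L2inner_add_left (hE u hu).1 (hE g hg).1 hu]
  ring

lemma le_re_L2inner_Abbm_sub_smul (hM : IsMult FT α D Mop) (hα : ∀ k, 0 ≤ (α k).re)
    (hE : IsMult FT β (fun u => MemLp u 2 volume) (Em lam)) (hβ_re : ∀ k, 0 ≤ (β k).re)
    (hβ_norm : ∀ k, ‖β k‖ ≤ 1) (hc : 0 ≤ c) (hD : D u) (hu : MemLp u 2 volume)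
    (hu_norm : L2norm u = 1) (hg : MemLp g 2 volume) (hg_norm : L2norm g ≤ ε)
    (hw : (fun y => (1 + Complex.ofReal (deriv f (uc y))) * u y) = u + g) (z : ℂ) :
    1 - 1/c - z.re - 2 * ε / c ≤
      (L2inner (fun x => Abbm Mop Em f uc c lam u x - z * u x) u).re := by
  have hMu_re := hM.re_L2inner_nonneg hα hD hu
  have hEu_re := hE.re_L2inner_nonneg hβ_re hu hu
  have hg_re : |(L2inner g u).re| ≤ ε :=
    (abs_re_L2inner_le hg hu).trans (by rw [hu_norm, mul_one]; exact hg_norm)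
  have hEg_re : |(L2inner (Em lam g) u).re| ≤ ε :=
    (abs_re_L2inner_le (hE g hg).1 hu).trans (by
      rw [hu_norm, mul_one]; exact (hE.L2norm_le hβ_norm hg hg).trans hg_norm)
  rw [L2inner_Abbm_sub_smul (hM u hD).1 hE hu hg hw, L2inner_self hu, hu_norm]
  have hc' : (1 / c : ℂ) = ((1 / c : ℝ) : ℂ) := by push_cast; rfl
  simp only [hc', Complex.add_re, Complex.sub_re, Complex.mul_re, Complex.ofReal_re,
    Complex.ofReal_im, Complex.ofReal_one, one_pow, Complex.one_re, mul_one, zero_mul, sub_zero]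
  have hc_inv : 0 ≤ 1 / c := one_div_nonneg.mpr hc
  have hg_le := mul_le_mul_of_nonneg_left (abs_le.mp hg_re).2 hc_inv
  have hEg_ge := mul_le_mul_of_nonneg_left (abs_le.mp hEg_re).1 hc_inv
  have hEu_ge := mul_nonneg hc_inv hEu_re
  have hsplit : 2 * ε / c = 1 / c * ε - 1 / c * -ε := by ring
  rw [hsplit, mul_add]
  linarith

end Abbm

theorem A_lambda_quadratic_tail_bound_general
    (m : ℝ)
    (α : ℝ → ℝ)
    (hα_nonneg : ∀ k, 0 ≤ α k)
    (FT : FourierL2)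
    (Mop : (ℝ → ℂ) → ℝ → ℂ)
    (hM : IsMult FT (fun k => (α k : ℂ)) (HmMem FT m) Mop)
    (f : ℝ → ℝ) (hf : ContDiff ℝ 1 f) (hf'0 : deriv f 0 = 0)
    (c : ℝ) (hc : 1 < c)
    (uc : ℝ → ℝ) (huc_cont : Continuous uc)
    (huc_decay : Tendsto uc (cocompact ℝ) (nhds 0))
    (Em : ℝ → (ℝ → ℂ) → ℝ → ℂ)
    (hEm : ∀ lam : ℝ, 0 < lam → IsMult FT
        (fun k => (lam : ℂ) / (lam - Complex.I * c * k)) (fun u => MemLp u 2 volume) (Em lam))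
    (lam : ℝ) (hlam : 0 < lam)
    (z : ℂ) (hz : z.re < (1/2) * (1 - 1/c)) :
    ∃ N : ℕ, ∀ n : ℕ, N ≤ n → ∀ u : ℝ → ℂ, HmMem FT m u →
      eLpNorm u 2 volume = 1 → Function.support u ⊆ {x : ℝ | (n : ℝ) ≤ |x|} →
      (1/4) * (1 - 1/c) ≤
        (L2inner (fun x => Abbm Mop Em f uc c lam u x - z * u x) u).re := by
  have hε : 0 < (c - 1) / 8 := by linarith
  have hφ : Tendsto (fun x => deriv f (uc x)) (cocompact ℝ) (nhds 0) := by
    have := ((hf.continuous_deriv le_rfl).tendsto 0).comp huc_decay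
    rwa [hf'0] at this
  obtain ⟨N, hN⟩ := exists_nat_forall_abs_le_of_tendsto_cocompact hφ hε
  refine ⟨N, fun n hn u hu hu_norm hu_supp => ?_⟩
  set g : ℝ → ℂ := fun x => Complex.ofReal (deriv f (uc x)) * u x
  have hg_le : ∀ x, ‖g x‖ ≤ (c - 1) / 8 * ‖u x‖ := fun x => by
    by_cases hx : u x = 0
    · simp [g, hx]
    rw [norm_mul, Complex.norm_real, Real.norm_eq_abs]
    exact mul_le_mul_of_nonneg_right
      (hN x ((Nat.cast_le.mpr hn).trans (hu_supp hx))) (norm_nonneg _)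
  have hg : MemLp g 2 volume := hu.1.of_le_mul
    ((Complex.measurable_ofReal.comp ((measurable_deriv f).comp huc_cont.measurable)
      ).aestronglyMeasurable.mul hu.1.aestronglyMeasurable) (Eventually.of_forall hg_le)
  have hu_norm' : L2norm u = 1 := by simp [L2norm, hu_norm]
  have hg_norm : L2norm g ≤ (c - 1) / 8 := by
    simpa [hu_norm'] using L2norm_le_mul_of_norm_le_mul hu.1 hε.le hg_le
  have hbound := le_re_L2inner_Abbm_sub_smul hM (by simpa using hα_nonneg) (hEm lam hlam)
    (re_ofReal_div_sub_I_mul_nonneg lam c) (norm_ofReal_div_sub_I_mul_le_one lam c)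
    (zero_le_one.trans hc.le) hu hu.1 hu_norm' hg hg_norm
    (by funext x; simp only [g, Pi.add_apply]; ring) z
  have hc_eq : 2 * ((c - 1) / 8) / c = (1 - 1 / c) / 4 := by field_simp; ring
  linarith

/-- Lemma 2.4: for `Re z < ½(1 - 1/c)` and `u` of unit `L²` norm supported in
`{|x| ≥ n}` with `n` large, `Re ((A^λ - z)u, u) ≥ ¼(1 - 1/c)`. -/
theorem A_lambda_quadratic_tail_bound
    (m : ℝ) (hm : 1 ≤ m)
    (α : ℝ → ℝ) (a b C₀ K : ℝ)
    (ha : 0 < a) (hb : 0 < b) (hC₀ : 0 < C₀) (hK : 0 < K)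
    (hα_nonneg : ∀ k, 0 ≤ α k) (hα_smooth : ContDiff ℝ 1 α)
    (hα_deriv : ∀ k, |deriv α k| ≤ C₀ * (1 + |k|) ^ (m - 1))
    (hα_lower : ∀ k, K ≤ |k| → a * |k| ^ m ≤ α k)
    (hα_upper : ∀ k, K ≤ |k| → α k ≤ b * |k| ^ m)
    (FT : FourierL2)
    (Mop : (ℝ → ℂ) → ℝ → ℂ)
    (hM : IsMult FT (fun k => (α k : ℂ)) (HmMem FT m) Mop)
    (f : ℝ → ℝ) (hf : ContDiff ℝ 1 f) (hf0 : f 0 = 0) (hf'0 : deriv f 0 = 0)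
    (c : ℝ) (hc : 1 < c)
    (uc : ℝ → ℝ) (huc_cont : Continuous uc)
    (huc_mem : HmMem FT m (fun x => (uc x : ℂ)))
    (huc_decay : Tendsto uc (cocompact ℝ) (nhds 0))
    (huc_eq : (fun x => Mop (fun y => (uc y : ℂ)) x + (1 - 1/c : ℂ) * (uc x : ℂ)
        - (1/c : ℂ) * (f (uc x) : ℂ)) =ᵐ[volume] 0)
    (Em : ℝ → (ℝ → ℂ) → ℝ → ℂ)
    (hEm : ∀ lam : ℝ, 0 < lam → IsMult FT
        (fun k => (lam : ℂ) / (lam - Complex.I * c * k)) (fun u => MemLp u 2 volume) (Em lam))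
    (lam : ℝ) (hlam : 0 < lam)
    (z : ℂ) (hz : z.re < (1/2) * (1 - 1/c)) :
    ∃ N : ℕ, ∀ n : ℕ, N ≤ n → ∀ u : ℝ → ℂ, HmMem FT m u →
      eLpNorm u 2 volume = 1 → Function.support u ⊆ {x : ℝ | (n : ℝ) ≤ |x|} →
      (1/4) * (1 - 1/c) ≤
        (L2inner (fun x => Abbm Mop Em f uc c lam u x - z * u x) u).re :=
  A_lambda_quadratic_tail_bound_general m α hα_nonneg FT Mop hM f hf hf'0 c hc uc huc_cont huc_decay
    Em hEm lam hlam z hz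
end
end

section
/- There exist λ₀ > 0 and C > 0 such that for every 0 < λ < λ₀, every z ∈ ℂ with Re z ≤ ½(1 − 1/c), and every u ∈ H^m(ℝ) and v ∈ L²(ℝ) satisfying (A^λ − z)u = v, one has ‖u‖_{H^{m/2}} ≤ C(‖u‖_{L²_e} + ‖v‖_{L²}), where C is independent of λ, z, u, v. -/
/-!
Pair `(A^λ - z)u = v` with `u` in `L²` and take real parts. On the Fourier side `M` contributes
`∫ α |û|² ≥ 0`, and since the symbol `λ/(λ - ick)` of `E^{λ,-}` has modulus at most one and
nonnegative real part, `Re ⟨u, E^{λ,-}((1 + f'(u_c)) u)⟩ ≥ -‖u‖ ‖f'(u_c) u‖ = -‖u‖ ‖u‖_{L²_e}`.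
This gives the energy inequality `∫ α |û|² + (1 - 1/c - Re z) ‖u‖² ≤ 2 ‖u‖ (‖u‖_{L²_e} + ‖v‖)`,
uniformly in `λ`. For `Re z ≤ ½(1 - 1/c)` it bounds both `∫ α |û|²` and `‖u‖²` by a multiple of
`(‖u‖_{L²_e} + ‖v‖)²`, and `α(k) ≥ a|k|^m` for `|k| ≥ K` turns these into the `H^{m/2}` bound.
-/

open MeasureTheory Filter Set

noncomputable section

/-- The `H^{m/2}` norm, `‖u‖²_{H^{m/2}} = ∫ (1+|k|^m)|û(k)|² dk`. -/
def HmHalfNorm (FT : FourierL2) (m : ℝ) (u : ℝ → ℂ) : ℝ :=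
  Real.sqrt (∫ k : ℝ, (1 + |k| ^ m) * ‖FT.toFun u k‖ ^ 2)

/-- The weighted norm `‖u‖_{L²_e}` with weight `e = (f'(u_c))²`. -/
def L2eNorm (f uc : ℝ → ℝ) (u : ℝ → ℂ) : ℝ :=
  Real.sqrt (∫ x : ℝ, (deriv f (uc x)) ^ 2 * ‖u x‖ ^ 2)

open scoped InnerProductSpace ComplexConjugate

theorem re_inner_add_mul_norm_sq_le {H : Type*} [NormedAddCommGroup H] [InnerProductSpace ℂ H]
    {s : ℝ} (hs0 : 0 ≤ s) (hs1 : s ≤ 1) (z : ℂ) {u g mu ew v : H}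
    (hew : -(‖u‖ * ‖g‖) ≤ (⟪u, ew⟫_ℂ).re) (hv : mu + u - (s : ℂ) • (u + g - ew) - z • u = v) :
    (⟪u, mu⟫_ℂ).re + (1 - s - z.re) * ‖u‖ ^ 2 ≤ 2 * ‖u‖ * (‖g‖ + ‖v‖) := by
  have hself : (⟪u, u⟫_ℂ).re = ‖u‖ ^ 2 := inner_self_eq_norm_sq (𝕜 := ℂ) u
  have hself_im : (⟪u, u⟫_ℂ).im = 0 := inner_self_im (𝕜 := ℂ) u
  have hre : (⟪u, v⟫_ℂ).re = (⟪u, mu⟫_ℂ).re + (1 - s - z.re) * ‖u‖ ^ 2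
      - s * (⟪u, g⟫_ℂ).re + s * (⟪u, ew⟫_ℂ).re := by
    rw [← hv]
    simp only [inner_add_right, inner_sub_right, inner_smul_right, Complex.add_re, Complex.sub_re,
      Complex.mul_re, Complex.ofReal_re, Complex.ofReal_im, hself, hself_im]
    ring
  have hug : (⟪u, g⟫_ℂ).re ≤ ‖u‖ * ‖g‖ := re_inner_le_norm (𝕜 := ℂ) u g
  have huv : (⟪u, v⟫_ℂ).re ≤ ‖u‖ * ‖v‖ := re_inner_le_norm (𝕜 := ℂ) u v
  have hsg : s * (‖u‖ * ‖g‖) ≤ ‖u‖ * ‖g‖ := mul_le_of_le_one_left (by positivity) hs1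
  linarith [mul_le_mul_of_nonneg_left hug hs0, mul_le_mul_of_nonneg_left hew hs0,
    mul_nonneg (norm_nonneg u) (norm_nonneg v)]

theorem le_and_sq_le_of_add_mul_sq_le {J N Q δ : ℝ} (hδ : 0 < δ) (hJ : 0 ≤ J)
    (h : J + δ * N ^ 2 ≤ 2 * N * Q) : J ≤ 2 * Q ^ 2 / δ ∧ N ^ 2 ≤ 4 * Q ^ 2 / δ ^ 2 := by
  -- AM-GM: `2 δ N Q ≤ (δ N)² / 2 + 2 Q²`.
  have hkey : δ * J + (δ * N) ^ 2 / 2 ≤ 2 * Q ^ 2 := by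
    nlinarith [sq_nonneg (δ * N - 2 * Q), mul_le_mul_of_nonneg_left h hδ.le]
  constructor
  · rw [le_div_iff₀ hδ]; nlinarith [sq_nonneg (δ * N)]
  · rw [le_div_iff₀ (by positivity)]; nlinarith

theorem integral_one_add_rpow_mul_le {μ : Measure ℝ} {m a K : ℝ} (hm : 0 ≤ m) (ha : 0 < a)
    (hK : 0 ≤ K) {α φ : ℝ → ℝ} (hα0 : ∀ k, 0 ≤ α k) (hα : ∀ k, K ≤ |k| → a * |k| ^ m ≤ α k)
    (hφ0 : ∀ k, 0 ≤ φ k) (hφ : Integrable φ μ) (hαφ : Integrable (fun k => α k * φ k) μ) :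
    ∫ k, (1 + |k| ^ m) * φ k ∂μ ≤ (1 + K ^ m) * ∫ k, φ k ∂μ + a⁻¹ * ∫ k, α k * φ k ∂μ := by
  rw [← integral_const_mul, ← integral_const_mul, ← integral_add (hφ.const_mul _)
    (hαφ.const_mul _)]
  refine integral_mono_of_nonneg (ae_of_all _ fun k => ?_) ((hφ.const_mul _).add
    (hαφ.const_mul _)) (ae_of_all _ fun k => ?_)
  · have := hφ0 k
    positivity
  rcases le_total |k| K with hk | hk
  · have : |k| ^ m ≤ K ^ m := Real.rpow_le_rpow (abs_nonneg k) hk hm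
    have : 0 ≤ a⁻¹ * (α k * φ k) := by have := hα0 k; have := hφ0 k; positivity
    nlinarith [hφ0 k]
  · have : |k| ^ m ≤ a⁻¹ * α k := by rw [le_inv_mul_iff₀ ha]; exact hα k hk
    nlinarith [hφ0 k, Real.rpow_nonneg hK m]

section L2

variable {X : Type*} [MeasurableSpace X] {μ : Measure X}

theorem MeasureTheory.MemLp.mul_of_norm_le {β u : X → ℂ} {p : ENNReal}
    (hβ : AEStronglyMeasurable β μ) {B : ℝ} (hB : ∀ x, ‖β x‖ ≤ B) (hu : MemLp u p μ) :
    MemLp (fun x => β x * u x) p μ :=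
  hu.of_le_mul (hβ.mul hu.aestronglyMeasurable) <| ae_of_all _ fun x => by
    rw [norm_mul]; exact mul_le_mul_of_nonneg_right (hB x) (norm_nonneg _)

theorem norm_toLp_mul_le {β u : X → ℂ} (hβ : ∀ x, ‖β x‖ ≤ 1) (hu : MemLp u 2 μ)
    (hβu : MemLp (fun x => β x * u x) 2 μ) : ‖hβu.toLp _‖ ≤ ‖hu.toLp u‖ := by
  rw [Lp.norm_toLp, Lp.norm_toLp]
  refine ENNReal.toReal_mono hu.eLpNorm_ne_top (eLpNorm_mono fun x => ?_)
  rw [norm_mul]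
  exact mul_le_of_le_one_left (norm_nonneg _) (hβ x)

theorem integrable_re_conj_mul {u w : X → ℂ} (hu : MemLp u 2 μ) (hw : MemLp w 2 μ) :
    Integrable (fun x => (conj (u x) * w x).re) μ :=
  (hu.star.integrable_mul hw).re

theorem re_inner_toLp {u w : X → ℂ} (hu : MemLp u 2 μ) (hw : MemLp w 2 μ) :
    (⟪hu.toLp u, hw.toLp w⟫_ℂ).re = ∫ x, (conj (u x) * w x).re ∂μ := by
  rw [L2.inner_def, ← RCLike.re_to_complex, ← integral_re (L2.integrable_inner _ _)]
  refine integral_congr_ae ?_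
  filter_upwards [hu.coeFn_toLp, hw.coeFn_toLp] with x hux hwx
  rw [hux, hwx, RCLike.inner_apply, mul_comm]
  rfl

theorem re_inner_toLp_mul_self_nonneg {β u : X → ℂ} (hβ : ∀ x, 0 ≤ (β x).re) (hu : MemLp u 2 μ)
    (hβu : MemLp (fun x => β x * u x) 2 μ) : 0 ≤ (⟪hu.toLp u, hβu.toLp _⟫_ℂ).re := by
  rw [re_inner_toLp]
  refine integral_nonneg fun x => ?_
  rw [mul_left_comm, Complex.conj_mul', ← Complex.ofReal_pow, Complex.re_mul_ofReal]
  exact mul_nonneg (hβ x) (sq_nonneg _)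

end L2

theorem Continuous.exists_forall_norm_le_of_tendsto_cocompact {X E : Type*} [TopologicalSpace X]
    [SeminormedAddCommGroup E] {φ : X → E} (hφ : Continuous φ) {y : E}
    (h : Tendsto φ (cocompact X) (nhds y)) : ∃ B, ∀ x, ‖φ x‖ ≤ B := by
  obtain ⟨B, hB⟩ :=
    isBounded_iff_forall_norm_le.mp (hφ.isBounded_range_iff_isBigO.mpr (h.isBigO_one ℝ))
  exact ⟨B, fun x => hB _ (mem_range_self x)⟩

theorem MeasureTheory.MemLp.mul_of_tendsto_cocompact {X : Type*} [TopologicalSpace X]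
    [MeasurableSpace X] [OpensMeasurableSpace X] {μ : Measure X} {φ u : X → ℂ} {p : ENNReal}
    (hφ : Continuous φ) {y : ℂ} (hlim : Tendsto φ (cocompact X) (nhds y)) (hu : MemLp u p μ) :
    MemLp (fun x => φ x * u x) p μ :=
  have ⟨_, hB⟩ := hφ.exists_forall_norm_le_of_tendsto_cocompact hlim
  hu.mul_of_norm_le hφ.aestronglyMeasurable hB

theorem Complex.norm_ofReal_div_le_one {r : ℝ} {w : ℂ} (hr : 0 ≤ r) (hw : r ≤ w.re) :
    ‖(r : ℂ) / w‖ ≤ 1 := by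
  rw [norm_div, Complex.norm_of_nonneg hr]
  exact div_le_one_of_le₀ (hw.trans (Complex.re_le_norm w)) (norm_nonneg w)

theorem Complex.re_ofReal_div_nonneg {r : ℝ} {w : ℂ} (hr : 0 ≤ r) (hw : 0 ≤ w.re) :
    0 ≤ ((r : ℂ) / w).re := by
  rw [Complex.div_re, Complex.ofReal_re, Complex.ofReal_im, zero_mul, zero_div, add_zero]
  exact div_nonneg (mul_nonneg hr hw) (Complex.normSq_nonneg w)

theorem resolvent_symbol_properties {lam : ℝ} (hlam : 0 < lam) (c : ℝ) :
    Continuous (fun k : ℝ => (lam : ℂ) / (lam - Complex.I * c * k)) ∧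
      (∀ k : ℝ, ‖(lam : ℂ) / (lam - Complex.I * c * k)‖ ≤ 1) ∧
      ∀ k : ℝ, 0 ≤ ((lam : ℂ) / (lam - Complex.I * c * k)).re := by
  have hre : ∀ k : ℝ, ((lam : ℂ) - Complex.I * c * k).re = lam := fun k => by simp
  refine ⟨continuous_const.div (by fun_prop) fun k h => hlam.ne' (by simpa [h] using (hre k).symm),
    fun k => Complex.norm_ofReal_div_le_one hlam.le (hre k).ge,
    fun k => Complex.re_ofReal_div_nonneg hlam.le (by rw [hre k]; exact hlam.le)⟩

theorem sq_L2norm {u : ℝ → ℂ} (hu : MemLp u 2 volume) : L2norm u ^ 2 = ∫ x, ‖u x‖ ^ 2 := by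
  rw [L2norm, ← Lp.norm_toLp u hu, ← inner_self_eq_norm_sq (𝕜 := ℂ), RCLike.re_to_complex,
    re_inner_toLp]
  congr with x
  rw [Complex.conj_mul', ← Complex.ofReal_pow, Complex.ofReal_re]

theorem L2norm_eq_sqrt_integral {u : ℝ → ℂ} (hu : MemLp u 2 volume) :
    L2norm u = √(∫ x, ‖u x‖ ^ 2) := by
  rw [← sq_L2norm hu]
  exact (Real.sqrt_sq ENNReal.toReal_nonneg).symm

theorem L2eNorm_eq_L2norm {f uc : ℝ → ℝ} {u : ℝ → ℂ}
    (hg : MemLp (fun x => ((deriv f (uc x) : ℝ) : ℂ) * u x) 2 volume) :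
    L2eNorm f uc u = L2norm (fun x => ((deriv f (uc x) : ℝ) : ℂ) * u x) := by
  rw [L2eNorm, L2norm_eq_sqrt_integral hg]
  simp only [norm_mul, Complex.norm_real, Real.norm_eq_abs, mul_pow, sq_abs]

namespace FourierL2

variable (FT : FourierL2)

theorem toFun_congr_ae {u u' : ℝ → ℂ} (hu : MemLp u 2 volume) (hu' : MemLp u' 2 volume)
    (h : u =ᵐ[volume] u') : FT.toFun u =ᵐ[volume] FT.toFun u' := by
  have hd : MemLp (u - u') 2 volume := hu.sub hu'
  have hFd : FT.toFun (u - u') =ᵐ[volume] 0 := by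
    rw [← eLpNorm_eq_zero_iff (FT.memLp _ hd).aestronglyMeasurable two_ne_zero,
      FT.plancherel _ hd, eLpNorm_eq_zero_iff hd.aestronglyMeasurable two_ne_zero]
    exact h.sub_eq
  have hadd := FT.map_add _ _ hu' hd
  rw [add_sub_cancel] at hadd
  filter_upwards [hadd, hFd] with x hx hx0
  simpa [hx0] using hx

def toLinearIsometry : Lp ℂ 2 (volume : Measure ℝ) →ₗᵢ[ℂ] Lp ℂ 2 (volume : Measure ℝ) where
  toFun g := (FT.memLp _ (Lp.memLp g)).toLp _
  map_add' g h := by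
    rw [← MemLp.toLp_add]
    exact MemLp.toLp_congr _ _
      ((FT.toFun_congr_ae (Lp.memLp _) ((Lp.memLp g).add (Lp.memLp h)) (Lp.coeFn_add g h)).trans
        (FT.map_add _ _ (Lp.memLp g) (Lp.memLp h)))
  map_smul' a g := by
    rw [RingHom.id_apply, ← MemLp.toLp_const_smul]
    exact MemLp.toLp_congr _ _
      ((FT.toFun_congr_ae (Lp.memLp _) ((Lp.memLp g).const_smul a) (Lp.coeFn_smul a g)).trans
        (FT.map_smul a _ (Lp.memLp g)))
  norm_map' g := by
    rw [LinearMap.coe_mk, AddHom.coe_mk, Lp.norm_toLp, FT.plancherel _ (Lp.memLp g), Lp.norm_def]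

theorem toLinearIsometry_toLp {u : ℝ → ℂ} (hu : MemLp u 2 volume) :
    FT.toLinearIsometry (hu.toLp u) = (FT.memLp u hu).toLp _ :=
  MemLp.toLp_congr (FT.memLp _ (Lp.memLp _)) _ (FT.toFun_congr_ae (Lp.memLp _) hu hu.coeFn_toLp)

theorem L2norm_toFun {u : ℝ → ℂ} (hu : MemLp u 2 volume) : L2norm (FT.toFun u) = L2norm u := by
  rw [L2norm, L2norm, FT.plancherel u hu]

theorem re_inner_toLp_of_isMult {α : ℝ → ℝ} {u w : ℝ → ℂ} (hu : MemLp u 2 volume)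
    (hw : MemLp w 2 volume) (hwF : FT.toFun w =ᵐ[volume] fun k => (α k : ℂ) * FT.toFun u k) :
    Integrable (fun k => α k * ‖FT.toFun u k‖ ^ 2) ∧
      (⟪hu.toLp u, hw.toLp w⟫_ℂ).re = ∫ k, α k * ‖FT.toFun u k‖ ^ 2 := by
  have hpointwise : (fun k => (conj (FT.toFun u k) * FT.toFun w k).re) =ᵐ[volume]
      fun k => α k * ‖FT.toFun u k‖ ^ 2 := by
    filter_upwards [hwF] with k hk
    rw [hk, mul_left_comm, Complex.conj_mul', ← Complex.ofReal_pow, ← Complex.ofReal_mul,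
      Complex.ofReal_re]
  refine ⟨(integrable_re_conj_mul (FT.memLp u hu) (FT.memLp w hw)).congr hpointwise, ?_⟩
  rw [← FT.toLinearIsometry.inner_map_map, FT.toLinearIsometry_toLp, FT.toLinearIsometry_toLp,
    re_inner_toLp, integral_congr_ae hpointwise]

theorem neg_mul_norm_le_re_inner_of_isMult {β : ℝ → ℂ} {E : (ℝ → ℂ) → ℝ → ℂ}
    (hE : IsMult FT β (fun u => MemLp u 2 volume) E) (hβ : Continuous β)
    (hβ1 : ∀ k, ‖β k‖ ≤ 1) (hβre : ∀ k, 0 ≤ (β k).re) {u g : ℝ → ℂ} (hu : MemLp u 2 volume)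
    (hg : MemLp g 2 volume) :
    -(‖hu.toLp u‖ * ‖hg.toLp g‖) ≤ (⟪hu.toLp u, (hE (u + g) (hu.add hg)).1.toLp _⟫_ℂ).re := by
  have hû := FT.memLp u hu
  have hĝ := FT.memLp g hg
  have hβû := hû.mul_of_norm_le hβ.aestronglyMeasurable hβ1
  have hβĝ := hĝ.mul_of_norm_le hβ.aestronglyMeasurable hβ1
  have hFEw : FT.toLinearIsometry ((hE (u + g) (hu.add hg)).1.toLp _) =
      hβû.toLp _ + hβĝ.toLp _ := by
    rw [FT.toLinearIsometry_toLp, ← MemLp.toLp_add]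
    refine MemLp.toLp_congr _ _ ((hE (u + g) (hu.add hg)).2.trans ?_)
    filter_upwards [FT.map_add u g hu hg] with k hk
    rw [hk, Pi.add_apply, Pi.add_apply, mul_add]
  have hU : ‖hû.toLp _‖ = ‖hu.toLp u‖ := by
    rw [← FT.toLinearIsometry_toLp hu, LinearIsometry.norm_map]
  have hG : ‖hβĝ.toLp _‖ ≤ ‖hg.toLp g‖ := (norm_toLp_mul_le hβ1 hĝ hβĝ).trans_eq <| by
    rw [← FT.toLinearIsometry_toLp hg, LinearIsometry.norm_map]
  have hcross : -(‖hu.toLp u‖ * ‖hg.toLp g‖) ≤ (⟪hû.toLp _, hβĝ.toLp _⟫_ℂ).re := by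
    rw [← hU]
    exact (neg_le_neg (mul_le_mul_of_nonneg_left hG (norm_nonneg _))).trans
      ((neg_le_neg (norm_inner_le_norm _ _)).trans (neg_le_of_abs_le (Complex.abs_re_le_norm _)))
  rw [← FT.toLinearIsometry.inner_map_map, hFEw, FT.toLinearIsometry_toLp hu, inner_add_right,
    Complex.add_re]
  linarith [re_inner_toLp_mul_self_nonneg hβre hû hβû]

theorem energy_estimate {α : ℝ → ℝ} {β : ℝ → ℂ}
    {D : (ℝ → ℂ) → Prop} {Mop E : (ℝ → ℂ) → ℝ → ℂ} (hM : IsMult FT (fun k => (α k : ℂ)) D Mop)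
    (hE : IsMult FT β (fun u => MemLp u 2 volume) E) (hβ : Continuous β)
    (hβ1 : ∀ k, ‖β k‖ ≤ 1) (hβre : ∀ k, 0 ≤ (β k).re) {s : ℝ} (hs0 : 0 ≤ s) (hs1 : s ≤ 1)
    (z : ℂ) {u g v : ℝ → ℂ} (hDu : D u) (hu : MemLp u 2 volume) (hg : MemLp g 2 volume)
    (hv : MemLp v 2 volume)
    (heq : (fun x => Mop u x + u x - s * (u x + g x - E (u + g) x) - z * u x) =ᵐ[volume] v) :
    Integrable (fun k => α k * ‖FT.toFun u k‖ ^ 2) ∧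
      (∫ k, α k * ‖FT.toFun u k‖ ^ 2) + (1 - s - z.re) * L2norm u ^ 2 ≤
        2 * L2norm u * (L2norm g + L2norm v) := by
  obtain ⟨hMu, hMuF⟩ := hM u hDu
  have hEw := (hE (u + g) (hu.add hg)).1
  obtain ⟨hJ, hMU⟩ := FT.re_inner_toLp_of_isMult hu hMu hMuF
  have hLp : hMu.toLp _ + hu.toLp u - (s : ℂ) • (hu.toLp u + hg.toLp g - hEw.toLp _)
      - z • hu.toLp u = hv.toLp v := by
    rw [← MemLp.toLp_add, ← MemLp.toLp_add, ← MemLp.toLp_sub, ← MemLp.toLp_const_smul,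
      ← MemLp.toLp_sub, ← MemLp.toLp_const_smul, ← MemLp.toLp_sub]
    exact MemLp.toLp_congr _ _ heq
  refine ⟨hJ, ?_⟩
  have := re_inner_add_mul_norm_sq_le hs0 hs1 z
    (FT.neg_mul_norm_le_re_inner_of_isMult hE hβ hβ1 hβre hu hg) hLp
  rw [hMU, Lp.norm_toLp, Lp.norm_toLp, Lp.norm_toLp] at this
  exact this

theorem hmHalfNorm_le_of_energy {m a K δ Q : ℝ} (hm : 0 ≤ m) (ha : 0 < a) (hK : 0 ≤ K)
    (hδ : 0 < δ) (hQ : 0 ≤ Q) {α : ℝ → ℝ} (hα0 : ∀ k, 0 ≤ α k)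
    (hα : ∀ k, K ≤ |k| → a * |k| ^ m ≤ α k) {u : ℝ → ℂ} (hu : MemLp u 2 volume)
    (hJ : Integrable (fun k => α k * ‖FT.toFun u k‖ ^ 2))
    (henergy : (∫ k, α k * ‖FT.toFun u k‖ ^ 2) + δ * L2norm u ^ 2 ≤ 2 * L2norm u * Q) :
    HmHalfNorm FT m u ≤ √((1 + K ^ m) * 4 / δ ^ 2 + 2 / (a * δ)) * Q := by
  have hN : ∫ k, ‖FT.toFun u k‖ ^ 2 = L2norm u ^ 2 := by
    rw [← sq_L2norm (FT.memLp u hu), FT.L2norm_toFun hu]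
  have hJ0 : 0 ≤ ∫ k, α k * ‖FT.toFun u k‖ ^ 2 :=
    integral_nonneg fun k => mul_nonneg (hα0 k) (sq_nonneg _)
  obtain ⟨hJQ, hNQ⟩ := le_and_sq_le_of_add_mul_sq_le hδ hJ0 henergy
  have hsplit := integral_one_add_rpow_mul_le hm ha hK hα0 hα (fun k => sq_nonneg _)
    ((FT.memLp u hu).integrable_norm_pow two_ne_zero) hJ
  rw [HmHalfNorm, ← Real.sqrt_sq hQ, ← Real.sqrt_mul (by positivity)]
  refine Real.sqrt_le_sqrt (hsplit.trans ?_)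
  rw [hN]
  calc (1 + K ^ m) * L2norm u ^ 2 + a⁻¹ * ∫ k, α k * ‖FT.toFun u k‖ ^ 2
      ≤ (1 + K ^ m) * (4 * Q ^ 2 / δ ^ 2) + a⁻¹ * (2 * Q ^ 2 / δ) := by
        have := Real.rpow_nonneg hK m
        gcongr
    _ = ((1 + K ^ m) * 4 / δ ^ 2 + 2 / (a * δ)) * Q ^ 2 := by
        field_simp

end FourierL2

theorem bbm_a_priori_estimate_general
    (m : ℝ) (hm : 1 ≤ m)
    (α : ℝ → ℝ) (a K : ℝ)
    (ha : 0 < a) (hK : 0 < K)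
    (hα_nonneg : ∀ k, 0 ≤ α k)
    (hα_lower : ∀ k, K ≤ |k| → a * |k| ^ m ≤ α k)
    (FT : FourierL2)
    (Mop : (ℝ → ℂ) → ℝ → ℂ)
    (hM : IsMult FT (fun k => (α k : ℂ)) (HmMem FT m) Mop)
    (f : ℝ → ℝ) (hf : ContDiff ℝ 1 f)
    (c : ℝ) (hc : 1 < c)
    (uc : ℝ → ℝ) (huc_cont : Continuous uc)
    (huc_decay : Tendsto uc (cocompact ℝ) (nhds 0))
    (Em : ℝ → (ℝ → ℂ) → ℝ → ℂ)
    (hEm : ∀ lam : ℝ, 0 < lam → IsMult FT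
        (fun k => (lam : ℂ) / (lam - Complex.I * c * k)) (fun u => MemLp u 2 volume) (Em lam))
    :
    ∃ lam₀ C : ℝ, 0 < lam₀ ∧ 0 < C ∧
      ∀ lam : ℝ, 0 < lam → lam < lam₀ →
      ∀ z : ℂ, z.re ≤ (1/2) * (1 - 1/c) →
      ∀ u v : ℝ → ℂ, HmMem FT m u → MemLp v 2 volume →
        (fun x => Abbm Mop Em f uc c lam u x - z * u x) =ᵐ[volume] v →
        HmHalfNorm FT m u ≤ C * (L2eNorm f uc u + L2norm v) := by
  have hs1 : 1 / c < 1 := (div_lt_one (by linarith)).mpr hc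
  set δ := (1 - 1 / c) / 2 with hδ_def
  have hδ : 0 < δ := by linarith
  have hf' : Continuous fun x => ((deriv f (uc x) : ℝ) : ℂ) :=
    Complex.continuous_ofReal.comp ((hf.continuous_deriv le_rfl).comp huc_cont)
  have hf'_lim := (Complex.continuous_ofReal.comp (hf.continuous_deriv le_rfl)).continuousAt
    |>.tendsto.comp huc_decay
  refine ⟨1, √((1 + K ^ m) * 4 / δ ^ 2 + 2 / (a * δ)), one_pos, by positivity,
    fun lam hlam _ z hz u v hu hv heq => ?_⟩
  set g : ℝ → ℂ := fun x => ((deriv f (uc x) : ℝ) : ℂ) * u x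
  have hg : MemLp g 2 volume := hu.1.mul_of_tendsto_cocompact hf' hf'_lim
  have heq' : (fun x => Mop u x + u x - ((1 / c : ℝ) : ℂ) * (u x + g x - Em lam (u + g) x)
      - z * u x) =ᵐ[volume] v := by
    have hw : (fun y => (1 + ((deriv f (uc y) : ℝ) : ℂ)) * u y) = u + g := by
      funext y; simp only [g, Pi.add_apply]; ring
    refine (EventuallyEq.of_eq (funext fun x => ?_)).trans heq
    simp only [Abbm, hw, g]
    push_cast
    ring
  obtain ⟨hβ, hβ1, hβre⟩ := resolvent_symbol_properties hlam c
  obtain ⟨hJ, henergy⟩ := FT.energy_estimate hM (hEm lam hlam) hβ hβ1 hβre (by positivity)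
    hs1.le z hu hu.1 hg hv heq'
  rw [L2eNorm_eq_L2norm hg]
  refine FT.hmHalfNorm_le_of_energy (by linarith) ha hK.le hδ
    (add_nonneg ENNReal.toReal_nonneg ENNReal.toReal_nonneg) hα_nonneg hα_lower hu.1 hJ
    (le_trans ?_ henergy)
  gcongr
  linarith

/-- Lemma 2.12: the a priori estimate `‖u‖_{H^{m/2}} ≤ C(‖u‖_{L²_e} + ‖v‖_{L²})` for
solutions of `(A^λ - z)u = v` with `λ` small and `Re z ≤ ½(1 - 1/c)`. -/
theorem bbm_a_priori_estimate
    (m : ℝ) (hm : 1 ≤ m)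
    (α : ℝ → ℝ) (a b C₀ K : ℝ)
    (ha : 0 < a) (hb : 0 < b) (hC₀ : 0 < C₀) (hK : 0 < K)
    (hα_nonneg : ∀ k, 0 ≤ α k) (hα_smooth : ContDiff ℝ 1 α)
    (hα_deriv : ∀ k, |deriv α k| ≤ C₀ * (1 + |k|) ^ (m - 1))
    (hα_lower : ∀ k, K ≤ |k| → a * |k| ^ m ≤ α k)
    (hα_upper : ∀ k, K ≤ |k| → α k ≤ b * |k| ^ m)
    (FT : FourierL2)
    (Mop : (ℝ → ℂ) → ℝ → ℂ)
    (hM : IsMult FT (fun k => (α k : ℂ)) (HmMem FT m) Mop)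
    (f : ℝ → ℝ) (hf : ContDiff ℝ 1 f) (hf0 : f 0 = 0) (hf'0 : deriv f 0 = 0)
    (c : ℝ) (hc : 1 < c)
    (uc : ℝ → ℝ) (huc_cont : Continuous uc)
    (huc_mem : HmMem FT m (fun x => (uc x : ℂ)))
    (huc_decay : Tendsto uc (cocompact ℝ) (nhds 0))
    (huc_eq : (fun x => Mop (fun y => (uc y : ℂ)) x + (1 - 1/c : ℂ) * (uc x : ℂ)
        - (1/c : ℂ) * (f (uc x) : ℂ)) =ᵐ[volume] 0)
    (Em : ℝ → (ℝ → ℂ) → ℝ → ℂ)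
    (hEm : ∀ lam : ℝ, 0 < lam → IsMult FT
        (fun k => (lam : ℂ) / (lam - Complex.I * c * k)) (fun u => MemLp u 2 volume) (Em lam))
    :
    ∃ lam₀ C : ℝ, 0 < lam₀ ∧ 0 < C ∧
      ∀ lam : ℝ, 0 < lam → lam < lam₀ →
      ∀ z : ℂ, z.re ≤ (1/2) * (1 - 1/c) →
      ∀ u v : ℝ → ℂ, HmMem FT m u → MemLp v 2 volume →
        (fun x => Abbm Mop Em f uc c lam u x - z * u x) =ᵐ[volume] v →
        HmHalfNorm FT m u ≤ C * (L2eNorm f uc u + L2norm v) :=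
  bbm_a_priori_estimate_general m hm α a K ha hK hα_nonneg hα_lower FT Mop hM f hf c hc uc huc_cont
    huc_decay Em hEm
end
end
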